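/- arXiv:1604.02369 — 4 statements merged into one kernel-verified Lean document; each statement's English description precedes it below -/
import Mathlib

section
/- For -1 ≤ r < 1 with r ≠ 0 and κ ∈ Γ₊, if a vector η ∈ ℝⁿ satisfies (D²F(κ))η = 0, where F(κ) = (n⁻¹ Σᵢ κᵢʳ)^{1/r}, then η is a scalar multiple of κ; explicitly ηᵢ = (Σₗ κₗʳ)⁻¹ (Σⱼ κⱼ^{r-1} ηⱼ) κᵢ. -/
/-!
With `S = ∑ₗ xₗʳ` and `c = n⁻¹`, the power mean is `(c S)^{1/r}`, whose gradient is
`c (c S)^{1/r-1} x^{r-1}` componentwise. Differentiating once more, the Hessian is a diagonal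
matrix plus a rank-one one, and its `i`-th row applied to `η` factors as
`c² (r - 1) (c S)^{1/r-2} xᵢ^{r-2} (S ηᵢ - xᵢ ∑ⱼ xⱼ^{r-1} ηⱼ)`.
For `r ≠ 1` and `x > 0` the prefactor does not vanish, so `ηᵢ` is proportional to `xᵢ`.
-/

open Real Finset ContinuousLinearMap

noncomputable def scaledPowerMean {ι : Type*} [Fintype ι] (c r : ℝ) (x : ι → ℝ) : ℝ :=
  (c * ∑ i, x i ^ r) ^ (1 / r)

section

variable {ι : Type*} [Fintype ι] {c r : ℝ} {x : ι → ℝ}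

theorem sum_rpow_pos [Nonempty ι] (hx : ∀ i, 0 < x i) : 0 < ∑ i, x i ^ r :=
  sum_pos (fun i _ => rpow_pos_of_pos (hx i) r) univ_nonempty

theorem hasFDerivAt_apply_rpow (p : ℝ) {j : ι} (hx : x j ≠ 0) :
    HasFDerivAt (fun y : ι → ℝ => y j ^ p)
      ((p * x j ^ (p - 1)) • proj j : (ι → ℝ) →L[ℝ] ℝ) x :=
  (hasDerivAt_rpow_const (Or.inl hx)).comp_hasFDerivAt (f := fun y : ι → ℝ => y j) x
    (hasFDerivAt_apply j x)

theorem hasFDerivAt_sum_rpow (hx : ∀ i, x i ≠ 0) :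
    HasFDerivAt (fun y : ι → ℝ => ∑ i, y i ^ r)
      (∑ i, (r * x i ^ (r - 1)) • proj i : (ι → ℝ) →L[ℝ] ℝ) x :=
  HasFDerivAt.fun_sum fun i _ => hasFDerivAt_apply_rpow r (hx i)

theorem hasFDerivAt_rpow_mul_sum_rpow (p : ℝ) (hx : ∀ i, x i ≠ 0)
    (hS : c * ∑ i, x i ^ r ≠ 0) :
    HasFDerivAt (fun y : ι → ℝ => (c * ∑ i, y i ^ r) ^ p)
      ((p * (c * ∑ i, x i ^ r) ^ (p - 1) * c) •
        (∑ i, (r * x i ^ (r - 1)) • proj i : (ι → ℝ) →L[ℝ] ℝ)) x := by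
  rw [mul_smul]
  exact (hasDerivAt_rpow_const (Or.inl hS)).comp_hasFDerivAt x
    ((hasFDerivAt_sum_rpow hx).const_mul c)

variable [DecidableEq ι]

noncomputable def secondPartial (f : (ι → ℝ) → ℝ) (x : ι → ℝ) (i j : ι) : ℝ :=
  fderiv ℝ (fun y => fderiv ℝ f y (Pi.single j 1)) x (Pi.single i 1)

theorem sum_smul_proj_apply_single (a : ι → ℝ) (j : ι) :
    (∑ i, a i • proj (R := ℝ) (φ := fun _ : ι => ℝ) i) (Pi.single j 1) = a j := by
  simp [Pi.single_apply]

theorem fderiv_scaledPowerMean_apply_single (hc : 0 < c) (hr : r ≠ 0)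
    (hx : ∀ i, 0 < x i) (j : ι) :
    fderiv ℝ (scaledPowerMean c r) x (Pi.single j 1) =
      c * (c * ∑ i, x i ^ r) ^ (1 / r - 1) * x j ^ (r - 1) := by
  have : Nonempty ι := ⟨j⟩
  have hS : 0 < c * ∑ i, x i ^ r := mul_pos hc (sum_rpow_pos hx)
  unfold scaledPowerMean
  rw [(hasFDerivAt_rpow_mul_sum_rpow (1 / r) (fun i => (hx i).ne') hS.ne').fderiv,
    smul_apply, sum_smul_proj_apply_single, smul_eq_mul]
  field_simp

theorem secondPartial_scaledPowerMean (hc : 0 < c) (hr : r ≠ 0) (hx : ∀ i, 0 < x i)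
    (i j : ι) :
    secondPartial (scaledPowerMean c r) x i j =
      c * (r - 1) * (c * ∑ l, x l ^ r) ^ (1 / r - 1) * x j ^ (r - 2) *
          (Pi.single i 1 : ι → ℝ) j +
        c ^ 2 * (1 - r) * (c * ∑ l, x l ^ r) ^ (1 / r - 2) * x i ^ (r - 1) * x j ^ (r - 1) := by
  have : Nonempty ι := ⟨j⟩
  have hS : 0 < c * ∑ l, x l ^ r := mul_pos hc (sum_rpow_pos hx)
  have hgrad : (fun y => fderiv ℝ (scaledPowerMean c r) y (Pi.single j 1)) =ᶠ[nhds x]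
      fun y => c * (c * ∑ l, y l ^ r) ^ (1 / r - 1) * y j ^ (r - 1) := by
    filter_upwards [(isOpen_set_pi Set.finite_univ fun _ _ => isOpen_Ioi).mem_nhds
      (Set.mem_univ_pi.mpr hx)] with y hy
    exact fderiv_scaledPowerMean_apply_single hc hr (Set.mem_univ_pi.mp hy) j
  have hG :=
    (hasFDerivAt_rpow_mul_sum_rpow (1 / r - 1) (fun l => (hx l).ne') hS.ne').const_mul c
  have hxj := hasFDerivAt_apply_rpow (r - 1) (hx j).ne'
  rw [secondPartial, hgrad.fderiv_eq, fderiv_fun_mul hG.differentiableAt hxj.differentiableAt,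
    hG.fderiv, hxj.fderiv]
  simp only [add_apply, smul_apply, sum_smul_proj_apply_single, proj_apply, smul_eq_mul]
  rw [show 1 / r - 1 - 1 = 1 / r - 2 by ring, show r - 1 - 1 = r - 2 by ring]
  field_simp

theorem sum_secondPartial_scaledPowerMean_mul (hc : 0 < c) (hr : r ≠ 0) (hx : ∀ i, 0 < x i)
    (η : ι → ℝ) (i : ι) :
    ∑ j, secondPartial (scaledPowerMean c r) x i j * η j =
      c ^ 2 * (r - 1) * (c * ∑ l, x l ^ r) ^ (1 / r - 2) * x i ^ (r - 2) *
        ((∑ l, x l ^ r) * η i - x i * ∑ j, x j ^ (r - 1) * η j) := by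
  have : Nonempty ι := ⟨i⟩
  have hS : 0 < c * ∑ l, x l ^ r := mul_pos hc (sum_rpow_pos hx)
  simp only [secondPartial_scaledPowerMean hc hr hx i, add_mul, sum_add_distrib, Pi.single_apply,
    mul_ite, ite_mul, mul_one, mul_zero, zero_mul, sum_ite_eq', mem_univ, if_true, mul_assoc,
    ← mul_sum]
  have hS1 : (c * ∑ l, x l ^ r) ^ (1 / r - 1) =
      (c * ∑ l, x l ^ r) ^ (1 / r - 2) * (c * ∑ l, x l ^ r) := by
    rw [← rpow_add_one hS.ne']; ring_nf
  have hxi : x i ^ (r - 1) = x i ^ (r - 2) * x i := by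
    rw [← rpow_add_one (hx i).ne']; ring_nf
  rw [hS1, hxi]
  ring

theorem eq_of_sum_secondPartial_scaledPowerMean_mul_eq_zero (hc : 0 < c) (hr0 : r ≠ 0)
    (hr1 : r ≠ 1) (hx : ∀ i, 0 < x i) {η : ι → ℝ} {i : ι}
    (hker : ∑ j, secondPartial (scaledPowerMean c r) x i j * η j = 0) :
    η i = (∑ l, x l ^ r)⁻¹ * (∑ j, x j ^ (r - 1) * η j) * x i := by
  have : Nonempty ι := ⟨i⟩
  have hS := sum_rpow_pos (r := r) hx
  have hfactor : c ^ 2 * (r - 1) * (c * ∑ l, x l ^ r) ^ (1 / r - 2) * x i ^ (r - 2) ≠ 0 :=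
    mul_ne_zero (mul_ne_zero (mul_ne_zero (by positivity) (sub_ne_zero.mpr hr1)) (by positivity))
      (by have := hx i; positivity)
  rw [sum_secondPartial_scaledPowerMean_mul hc hr0 hx, mul_eq_zero, sub_eq_zero] at hker
  field_simp
  linarith [hker.resolve_left hfactor]

end

theorem powerMean_hessian_kernel_general (n : ℕ) (r : ℝ)
    (hr2 : r < 1) (hr0 : r ≠ 0)
    (F : (Fin n → ℝ) → ℝ)
    (hF : ∀ κ : Fin n → ℝ, F κ = ((n : ℝ)⁻¹ * ∑ i, κ i ^ r) ^ (1 / r))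
    (κ : Fin n → ℝ) (hκ : ∀ i, 0 < κ i) (η : Fin n → ℝ)
    (hker : ∀ i, ∑ j, fderiv ℝ (fun x => fderiv ℝ F x (Pi.single j 1)) κ
      (Pi.single i 1) * η j = 0) :
    (∀ i, η i = (∑ l, κ l ^ r)⁻¹ * (∑ j, κ j ^ (r - 1) * η j) * κ i) ∧
      ∃ lam : ℝ, η = lam • κ := by
  obtain rfl : F = scaledPowerMean (n : ℝ)⁻¹ r := funext hF
  have hη : ∀ i, η i = (∑ l, κ l ^ r)⁻¹ * (∑ j, κ j ^ (r - 1) * η j) * κ i := by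
    intro i
    have hc : (0 : ℝ) < (n : ℝ)⁻¹ := by have := i.pos; positivity
    exact eq_of_sum_secondPartial_scaledPowerMean_mul_eq_zero hc hr0 hr2.ne hκ (hker i)
  exact ⟨hη, _, funext hη⟩

/-- If `η` is in the kernel of the Hessian of the power mean
`F(κ) = (n⁻¹ ∑ᵢ κᵢʳ)^{1/r}` at `κ ∈ Γ₊`, then `η` is a multiple of `κ`:
explicitly `ηᵢ = (∑ₗ κₗʳ)⁻¹ (∑ⱼ κⱼ^{r-1} ηⱼ) κᵢ`. -/
theorem powerMean_hessian_kernel (n : ℕ) (hn : 1 ≤ n) (r : ℝ)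
    (hr1 : -1 ≤ r) (hr2 : r < 1) (hr0 : r ≠ 0)
    (F : (Fin n → ℝ) → ℝ)
    (hF : ∀ κ : Fin n → ℝ, F κ = ((n : ℝ)⁻¹ * ∑ i, κ i ^ r) ^ (1 / r))
    (κ : Fin n → ℝ) (hκ : ∀ i, 0 < κ i) (η : Fin n → ℝ)
    (hker : ∀ i, ∑ j, fderiv ℝ (fun x => fderiv ℝ F x (Pi.single j 1)) κ
      (Pi.single i 1) * η j = 0) :
    (∀ i, η i = (∑ l, κ l ^ r)⁻¹ * (∑ j, κ j ^ (r - 1) * η j) * κ i) ∧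
      ∃ lam : ℝ, η = lam • κ :=
  powerMean_hessian_kernel_general n r hr2 hr0 F hF κ hκ η hker
end

section
/- The power mean F(κ) = (n⁻¹ Σᵢ κᵢʳ)^{1/r}, for -1 ≤ r < 1 and r ≠ 0, is strictly concave in non-radial directions on Γ₊: for every κ ∈ Γ₊ and every nonzero ξ ∈ ℝⁿ not proportional to κ, one has Σᵢⱼ Fᵢⱼ(κ) ξᵢ ξⱼ < 0. -/
/-! Write `F = φ ∘ g` with `g κ = ∑ κᵢʳ` and `φ s = (s / n) ^ (1 / r)`. The chain rule gives
`D²F(ξ, ξ) = φ''(g) (Dg ξ)² + φ'(g) D²g(ξ, ξ)`, and since `r · (1 / r) = 1` this collapses to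
`(1 - r) n⁻² (S / n) ^ (1 / r - 2) (T² - S W)` with `S = ∑ κᵢʳ`, `T = ∑ κᵢ^(r-1) ξᵢ`,
`W = ∑ κᵢ^(r-2) ξᵢ²`. Cauchy–Schwarz for the weights `κᵢ^(r-2)`, applied to `κ` and `ξ`, gives
`T² < S W` as soon as `ξ` is not a multiple of `κ`. -/

open Real Finset Filter Topology

theorem sq_sum_mul_mul_lt_of_not_proportional {ι : Type*} [Fintype ι] {w a b : ι → ℝ}
    (hw : ∀ i, 0 < w i) (ha : a ≠ 0) (hab : ¬∃ t : ℝ, b = t • a) :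
    (∑ i, w i * a i * b i) ^ 2 < (∑ i, w i * a i ^ 2) * ∑ i, w i * b i ^ 2 := by
  set S := ∑ i, w i * a i ^ 2
  set T := ∑ i, w i * a i * b i
  set W := ∑ i, w i * b i ^ 2
  obtain ⟨k, hk⟩ := Function.ne_iff.1 ha
  have hS : 0 < S := sum_pos' (fun i _ => by have := hw i; positivity)
    ⟨k, mem_univ k, mul_pos (hw k) (pow_two_pos_of_ne_zero hk)⟩
  obtain ⟨m, hm⟩ : ∃ m, S * b m - T * a m ≠ 0 := by
    by_contra! h
    refine hab ⟨T / S, funext fun i => ?_⟩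
    simp only [Pi.smul_apply, smul_eq_mul]
    field_simp
    linarith [h i]
  have hsq : ∑ i, w i * (S * b i - T * a i) ^ 2 = S * (S * W - T ^ 2) := by
    have expand : ∀ i, w i * (S * b i - T * a i) ^ 2
        = S ^ 2 * (w i * b i ^ 2) - 2 * S * T * (w i * a i * b i) + T ^ 2 * (w i * a i ^ 2) :=
      fun i => by ring
    simp only [expand, sum_add_distrib, sum_sub_distrib, ← mul_sum]
    ring
  have hpos : 0 < ∑ i, w i * (S * b i - T * a i) ^ 2 :=
    sum_pos' (fun i _ => by have := hw i; positivity)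
      ⟨m, mem_univ m, mul_pos (hw m) (pow_two_pos_of_ne_zero hm)⟩
  exact sub_pos.1 (pos_of_mul_pos_right (hsq ▸ hpos) hS.le)

theorem sum_sum_apply_single_mul {ι : Type*} [Fintype ι] [DecidableEq ι]
    (B : (ι → ℝ) →L[ℝ] (ι → ℝ) →L[ℝ] ℝ) (ξ : ι → ℝ) :
    ∑ i, ∑ j, B (Pi.single i 1) (Pi.single j 1) * ξ i * ξ j = B ξ ξ := by
  have hξ : ξ = ∑ i, ξ i • Pi.single i (1 : ℝ) := by
    ext k; simp [Finset.sum_apply, Pi.single_apply]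
  conv_rhs => rw [hξ]
  simp only [map_sum, map_smul, FunLike.coe_sum, Finset.sum_apply, FunLike.coe_smul,
    Pi.smul_apply, smul_eq_mul, mul_sum]
  rw [sum_comm]
  exact sum_congr rfl fun i _ => sum_congr rfl fun j _ => by ring

section SecondDerivative

variable {E G : Type*} [NormedAddCommGroup E] [NormedSpace ℝ E]
  [NormedAddCommGroup G] [NormedSpace ℝ G]

theorem fderiv_fderiv_apply_of_hasFDerivAt {F : E → G} {F'' : E →L[ℝ] E →L[ℝ] G} {x : E}
    (h : HasFDerivAt (fderiv ℝ F) F'' x) (u v : E) :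
    fderiv ℝ (fun y => fderiv ℝ F y v) x u = F'' u v := by
  rw [(h.clm_apply (hasFDerivAt_const v x)).fderiv]
  simp

theorem hasFDerivAt_fderiv_comp {φ φ' : ℝ → ℝ} {φ'' : ℝ} {g : E → ℝ} {g' : E → E →L[ℝ] ℝ}
    {g'' : E →L[ℝ] E →L[ℝ] ℝ} {x : E}
    (hφ : ∀ᶠ s in 𝓝 (g x), HasDerivAt φ (φ' s) s) (hφ' : HasDerivAt φ' φ'' (g x))
    (hg : ∀ᶠ y in 𝓝 x, HasFDerivAt g (g' y) y) (hg' : HasFDerivAt g' g'' x) :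
    HasFDerivAt (fderiv ℝ (fun y => φ (g y)))
      (φ' (g x) • g'' + (φ'' • g' x).smulRight (g' x)) x := by
  have hφg : ∀ᶠ y in 𝓝 x, HasDerivAt φ (φ' (g y)) (g y) :=
    hg.self_of_nhds.continuousAt.eventually hφ
  have hderiv : (fun y => φ' (g y) • g' y) =ᶠ[𝓝 x] fderiv ℝ (fun y => φ (g y)) := by
    filter_upwards [hφg, hg] with y hφy hgy
    exact (hφy.comp_hasFDerivAt y hgy).fderiv.symm
  exact ((hφ'.comp_hasFDerivAt x hg.self_of_nhds).smul hg').congr_of_eventuallyEq hderiv.symm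

end SecondDerivative

section SeparableSum

variable {ι : Type*} [Fintype ι] {f f' : ℝ → ℝ} {x : ι → ℝ}

theorem hasFDerivAt_sum_comp_apply (hf : ∀ i, HasDerivAt f (f' (x i)) (x i)) :
    HasFDerivAt (fun y : ι → ℝ => ∑ i, f (y i))
      (∑ i, f' (x i) • (ContinuousLinearMap.proj i : (ι → ℝ) →L[ℝ] ℝ)) x :=
  HasFDerivAt.fun_sum fun i _ => (hf i).comp_hasFDerivAt x (hasFDerivAt_apply i x)

theorem hasFDerivAt_sum_smul_proj {f'' : ℝ → ℝ} (hf' : ∀ i, HasDerivAt f' (f'' (x i)) (x i)) :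
    HasFDerivAt (fun y : ι → ℝ => ∑ i, f' (y i) • (ContinuousLinearMap.proj i : (ι → ℝ) →L[ℝ] ℝ))
      (∑ i, (f'' (x i) • (ContinuousLinearMap.proj i : (ι → ℝ) →L[ℝ] ℝ)).smulRight
        (ContinuousLinearMap.proj i : (ι → ℝ) →L[ℝ] ℝ)) x :=
  HasFDerivAt.fun_sum fun i _ =>
    ((hf' i).comp_hasFDerivAt x (hasFDerivAt_apply (𝕜 := ℝ) i x)).smul_const
      (ContinuousLinearMap.proj i : (ι → ℝ) →L[ℝ] ℝ)

end SeparableSum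

theorem hasDerivAt_const_mul_rpow {c p s : ℝ} (h : c * s ≠ 0) :
    HasDerivAt (fun t => (c * t) ^ p) (p * c * (c * s) ^ (p - 1)) s := by
  convert ((hasDerivAt_id' s).const_mul c).rpow_const (p := p) (Or.inl h) using 1
  ring

theorem inv_mul_sum_rpow_pos {n : ℕ} [NeZero n] {κ : Fin n → ℝ} (hκ : ∀ i, 0 < κ i) (r : ℝ) :
    0 < (n : ℝ)⁻¹ * ∑ i, κ i ^ r :=
  mul_pos (inv_pos.2 (Nat.cast_pos.2 (NeZero.pos n)))
    (sum_pos (fun i _ => rpow_pos_of_pos (hκ i) r) univ_nonempty)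

theorem sum_sum_fderiv_fderiv_powerMean {n : ℕ} [NeZero n] {r : ℝ} (hr0 : r ≠ 0)
    {κ : Fin n → ℝ} (hκ : ∀ i, 0 < κ i) (ξ : Fin n → ℝ) :
    ∑ i, ∑ j, fderiv ℝ (fun x => fderiv ℝ (fun y : Fin n → ℝ => ((n : ℝ)⁻¹ * ∑ k, y k ^ r) ^ (1 / r))
        x (Pi.single j 1)) κ (Pi.single i 1) * ξ i * ξ j
      = (1 - r) * (n : ℝ)⁻¹ ^ 2 * ((n : ℝ)⁻¹ * ∑ k, κ k ^ r) ^ (1 / r - 2)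
        * ((∑ k, κ k ^ (r - 1) * ξ k) ^ 2 - (∑ k, κ k ^ r) * ∑ k, κ k ^ (r - 2) * ξ k ^ 2) := by
  have hcS := inv_mul_sum_rpow_pos hκ r
  set c : ℝ := (n : ℝ)⁻¹
  set p : ℝ := 1 / r with hp
  have hκ' : ∀ᶠ x in 𝓝 κ, ∀ i, 0 < x i :=
    eventually_all.2 fun i => (continuous_apply i).continuousAt.eventually (lt_mem_nhds (hκ i))
  have hF'' := hasFDerivAt_fderiv_comp (φ := fun s => (c * s) ^ p)
    (φ' := fun s => p * c * (c * s) ^ (p - 1)) (g := fun x : Fin n → ℝ => ∑ i, x i ^ r)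
    (((continuousAt_const.mul continuousAt_id).eventually (lt_mem_nhds hcS)).mono
      fun s hs => hasDerivAt_const_mul_rpow hs.ne')
    ((hasDerivAt_const_mul_rpow hcS.ne').const_mul (p * c))
    (hκ'.mono fun x hx => hasFDerivAt_sum_comp_apply (f := (· ^ r))
      (f' := fun t => r * t ^ (r - 1)) fun i => hasDerivAt_rpow_const (Or.inl (hx i).ne'))
    (hasFDerivAt_sum_smul_proj (f' := fun t => r * t ^ (r - 1))
      (f'' := fun t => r * ((r - 1) * t ^ (r - 1 - 1))) fun i =>
        (hasDerivAt_rpow_const (Or.inl (hκ i).ne')).const_mul r)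
  simp only [fderiv_fderiv_apply_of_hasFDerivAt hF'', sum_sum_apply_single_mul]
  simp only [add_apply, smul_apply, ContinuousLinearMap.smulRight_apply, FunLike.coe_sum,
    Finset.sum_apply, ContinuousLinearMap.proj_apply, smul_eq_mul]
  set S := ∑ k, κ k ^ r
  have hpow : (c * S) ^ (p - 1) = (c * S) ^ (p - 1 - 1) * (c * S) := by
    rw [← rpow_add_one hcS.ne']; ring_nf
  have hW : ∑ i, r * ((r - 1) * κ i ^ (r - 1 - 1)) * ξ i * ξ i
      = r * (r - 1) * ∑ k, κ k ^ (r - 2) * ξ k ^ 2 := by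
    rw [mul_sum]; exact sum_congr rfl fun i _ => by ring_nf
  have hT : ∑ i, r * κ i ^ (r - 1) * ξ i = r * ∑ k, κ k ^ (r - 1) * ξ k := by
    rw [mul_sum]; exact sum_congr rfl fun i _ => by ring
  rw [hW, hT, hpow, show p - 1 - 1 = p - 2 by ring, hp]
  field_simp
  ring

theorem powerMean_strictly_concave_nonradial_general (n : ℕ) (r : ℝ)
    (hr2 : r < 1) (hr0 : r ≠ 0)
    (F : (Fin n → ℝ) → ℝ)
    (hF : ∀ κ : Fin n → ℝ, F κ = ((n : ℝ)⁻¹ * ∑ i, κ i ^ r) ^ (1 / r))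
    (κ : Fin n → ℝ) (hκ : ∀ i, 0 < κ i)
    (ξ : Fin n → ℝ) (hξκ : ¬ ∃ lam : ℝ, ξ = lam • κ) :
    ∑ i, ∑ j, fderiv ℝ (fun x => fderiv ℝ F x (Pi.single j 1)) κ
      (Pi.single i 1) * ξ i * ξ j < 0 := by
  have : NeZero n := ⟨fun hn => hξκ ⟨0, by subst hn; exact Subsingleton.elim _ _⟩⟩
  obtain rfl : F = fun x => ((n : ℝ)⁻¹ * ∑ i, x i ^ r) ^ (1 / r) := funext hF
  rw [sum_sum_fderiv_fderiv_powerMean hr0 hκ]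
  have hweight : ∀ i, κ i ^ (r - 2) * κ i = κ i ^ (r - 1) := fun i => by
    rw [← rpow_add_one (hκ i).ne']; ring_nf
  have hweight_sq : ∀ i, κ i ^ (r - 2) * κ i ^ 2 = κ i ^ r := fun i => by
    rw [← rpow_add_natCast (hκ i).ne']; norm_num
  have hCS := sq_sum_mul_mul_lt_of_not_proportional (w := fun i => κ i ^ (r - 2))
    (fun i => rpow_pos_of_pos (hκ i) _) (fun h => (hκ 0).ne' (congrFun h 0)) hξκ
  simp only [hweight, hweight_sq] at hCS
  exact mul_neg_of_pos_of_neg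
    (mul_pos (mul_pos (sub_pos.2 hr2) (pow_pos (inv_pos.2 (Nat.cast_pos.2 (NeZero.pos n))) 2))
      (rpow_pos_of_pos (inv_mul_sum_rpow_pos hκ r) _)) (sub_neg.2 hCS)

/-- The power mean `F(κ) = (n⁻¹ ∑ᵢ κᵢʳ)^{1/r}`, `-1 ≤ r < 1`, `r ≠ 0`, is
strictly concave in non-radial directions on the positive cone `Γ₊`. -/
theorem powerMean_strictly_concave_nonradial (n : ℕ) (hn : 1 ≤ n) (r : ℝ)
    (hr1 : -1 ≤ r) (hr2 : r < 1) (hr0 : r ≠ 0)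
    (F : (Fin n → ℝ) → ℝ)
    (hF : ∀ κ : Fin n → ℝ, F κ = ((n : ℝ)⁻¹ * ∑ i, κ i ^ r) ^ (1 / r))
    (κ : Fin n → ℝ) (hκ : ∀ i, 0 < κ i)
    (ξ : Fin n → ℝ) (hξ0 : ξ ≠ 0) (hξκ : ¬ ∃ lam : ℝ, ξ = lam • κ) :
    ∑ i, ∑ j, fderiv ℝ (fun x => fderiv ℝ F x (Pi.single j 1)) κ
      (Pi.single i 1) * ξ i * ξ j < 0 :=
  powerMean_strictly_concave_nonradial_general n r hr2 hr0 F hF κ hκ ξ hξκ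
end

section
/- Let F : Γ₊ → ℝ be C², symmetric, positively 1-homogeneous, normalized by F(1,…,1) = 1, with positive first derivatives. Define φ(κ) = (Σᵢ Fᵢ(κ)) |κ|² − F(κ) (Σᵢ κᵢ), where |κ|² = Σᵢ κᵢ². Then φ vanishes to second order on the diagonal: φ(t,…,t) = 0 and Dφ(t,…,t) = 0 for all t > 0, and consequently for κ in any compact subset of Γ₊ there is C > 0 with φ(κ) ≤ C Σ_{i<j} (κᵢ − κⱼ)². -/
/-!
By Euler's relation `F = ∑ κᵢ Fᵢ`, the quantity `φ` equals
`∑_{i<j} (κᵢ - κⱼ) (Fⱼ κᵢ - Fᵢ κⱼ)`. Symmetry of `F` gives `Fᵢ = Fⱼ` on the diagonal, so each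
term is a product of two differentiable functions vanishing there, and `φ`, `Dφ` vanish on the
diagonal. For the bound write `Fⱼ κᵢ - Fᵢ κⱼ = Fᵢ (κᵢ - κⱼ) + κᵢ (Fⱼ - Fᵢ)` and use
`Fⱼ(κ) = Fᵢ(κ ∘ (i j))`: `DF` is Lipschitz on the compact set of all coordinate permutations of
points of `K`, so `|Fⱼ - Fᵢ| ≤ L |κᵢ - κⱼ|` there.
-/

open Finset Filter Topology NNReal

namespace Finset

variable {ι : Type*} [Fintype ι] [LinearOrder ι]

theorem sum_sum_eq_sum_sum_lt_add_swap {M : Type*} [AddCommMonoid M] (f : ι → ι → M)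
    (hf : ∀ i, f i i = 0) :
    ∑ i, ∑ j, f i j = ∑ i, ∑ j ∈ univ.filter (fun j => i < j), (f i j + f j i) := by
  have hsplit : ∀ i j, f i j = (if i < j then f i j else 0) + (if j < i then f i j else 0) := by
    intro i j
    rcases lt_trichotomy i j with h | rfl | h
    · simp [h, h.not_gt]
    · simp [hf]
    · simp [h, h.not_gt]
  calc ∑ i, ∑ j, f i j
      = ∑ i, ∑ j, (if i < j then f i j else 0) + ∑ i, ∑ j, (if j < i then f i j else 0) := by
        simp_rw [← sum_add_distrib, ← hsplit]
    _ = ∑ i, ∑ j, (if i < j then f i j else 0) + ∑ i, ∑ j, (if i < j then f j i else 0) := by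
        rw [sum_comm (f := fun i j => if j < i then f i j else 0)]
    _ = _ := by simp_rw [sum_filter, ← sum_add_distrib, ite_add_ite, add_zero]

theorem sum_mul_sum_sq_sub_sum_mul_mul_sum {R : Type*} [CommRing R] (a x : ι → R) :
    (∑ i, a i) * ∑ i, x i ^ 2 - (∑ i, x i * a i) * ∑ i, x i =
      ∑ i, ∑ j ∈ univ.filter (fun j => i < j), (x i - x j) * (a j * x i - a i * x j) := by
  rw [sum_mul_sum, sum_mul_sum, ← sum_sub_distrib]
  simp_rw [← sum_sub_distrib]
  rw [sum_sum_eq_sum_sum_lt_add_swap _ (fun i => by ring)]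
  exact sum_congr rfl fun i _ => sum_congr rfl fun j _ => by ring

end Finset

theorem sub_mul_sub_le_of_abs_sub_le {a b u v A B L : ℝ} (ha : a ≤ A) (hu : |u| ≤ B)
    (hab : |b - a| ≤ L * |u - v|) :
    (u - v) * (b * u - a * v) ≤ (A + B * L) * (u - v) ^ 2 := by
  have hcross : u * (u - v) * (b - a) ≤ B * L * (u - v) ^ 2 := by
    calc u * (u - v) * (b - a) ≤ |u| * |b - a| * |u - v| := by
          rw [mul_right_comm, ← abs_mul, ← abs_mul]; exact le_abs_self _
      _ ≤ B * (L * |u - v|) * |u - v| := by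
          have hL_nonneg := (abs_nonneg _).trans hab
          have hB_nonneg := (abs_nonneg u).trans hu
          gcongr
      _ = B * L * (u - v) ^ 2 := by rw [mul_assoc B, mul_assoc, ← sq, sq_abs]; ring
  calc (u - v) * (b * u - a * v) = a * (u - v) ^ 2 + u * (u - v) * (b - a) := by ring
    _ ≤ A * (u - v) ^ 2 + B * L * (u - v) ^ 2 := by gcongr
    _ = (A + B * L) * (u - v) ^ 2 := by ring

section Calculus

variable {𝕜 E : Type*} [NontriviallyNormedField 𝕜] [NormedAddCommGroup E] [NormedSpace 𝕜 E]

theorem hasFDerivAt_mul_zero_of_eq_zero {𝔸 : Type*} [NormedCommRing 𝔸] [NormedAlgebra 𝕜 𝔸]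
    {f g : E → 𝔸} {x : E} (hf : DifferentiableAt 𝕜 f x) (hg : DifferentiableAt 𝕜 g x)
    (hfx : f x = 0) (hgx : g x = 0) : HasFDerivAt (fun y => f y * g y) (0 : E →L[𝕜] 𝔸) x := by
  convert hf.hasFDerivAt.fun_mul hg.hasFDerivAt using 1
  ext v
  simp [hfx, hgx]

end Calculus

section Real

variable {E F : Type*} [NormedAddCommGroup E] [NormedSpace ℝ E] [NormedAddCommGroup F]
  [NormedSpace ℝ F]

theorem fderiv_apply_self_of_homogeneous {f : E → F} {x : E} (hf : DifferentiableAt ℝ f x)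
    (hhom : ∀ᶠ l in 𝓝 (1 : ℝ), f (l • x) = l • f x) : fderiv ℝ f x x = f x := by
  have hchain : HasDerivAt (fun l : ℝ => f (l • x)) (fderiv ℝ f x x) 1 := by
    have := (one_smul ℝ x).symm ▸ hf.hasFDerivAt
    simpa [Function.comp_def] using
      this.comp_hasDerivAt (1 : ℝ) ((hasDerivAt_id (1 : ℝ)).smul_const x)
  have hlinear : HasDerivAt (fun l : ℝ => f (l • x)) (f x) 1 := by
    simpa using ((hasDerivAt_id (1 : ℝ)).smul_const (f x)).congr_of_eventuallyEq hhom
  exact hchain.unique hlinear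

theorem ContDiffOn.exists_lipschitzOnWith_of_isCompact {f : E → F} {U K : Set E}
    (hf : ContDiffOn ℝ 1 f U) (hU : IsOpen U) (hK : IsCompact K) (hKU : K ⊆ U) :
    ∃ L, LipschitzOnWith L f K := by
  refine LocallyLipschitzOn.exists_lipschitzOnWith_of_compact hK fun x hx => ?_
  obtain ⟨L, t, ht, hL⟩ := (hf.contDiffAt (hU.mem_nhds (hKU hx))).exists_lipschitzOnWith
  exact ⟨L, t, mem_nhdsWithin_of_mem_nhds ht, hL⟩

end Real

section Coordinates

variable {ι F : Type*} [Fintype ι] [NormedAddCommGroup F] [NormedSpace ℝ F]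

theorem ContinuousLinearMap.apply_eq_sum_mul_apply_single [DecidableEq ι]
    (T : (ι → ℝ) →L[ℝ] ℝ) (x : ι → ℝ) : T x = ∑ i, x i * T (Pi.single i 1) := by
  conv_lhs => rw [← Finset.univ_sum_single x]
  rw [map_sum]
  refine sum_congr rfl fun i _ => ?_
  rw [← smul_eq_mul, ← map_smul, ← Pi.single_smul', smul_eq_mul, mul_one]

theorem ContinuousLinearMap.norm_apply_single_le [DecidableEq ι] (T : (ι → ℝ) →L[ℝ] F) (i : ι) :
    ‖T (Pi.single i 1)‖ ≤ ‖T‖ := by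
  have hsingle : ‖(Pi.single i 1 : ι → ℝ)‖ ≤ 1 := by rw [Pi.norm_single, norm_one]
  simpa using T.le_opNorm_of_le hsingle

theorem norm_comp_swap_sub_le {G : Type*} [SeminormedAddCommGroup G] [DecidableEq ι]
    (x : ι → G) (i j : ι) : ‖x ∘ Equiv.swap i j - x‖ ≤ ‖x i - x j‖ := by
  refine (pi_norm_le_iff_of_nonneg (norm_nonneg _)).2 fun k => ?_
  rcases eq_or_ne k i with rfl | hki
  · simp [norm_sub_rev]
  rcases eq_or_ne k j with rfl | hkj
  · simp
  simp [Equiv.swap_apply_of_ne_of_ne hki hkj]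

theorem fderiv_apply_eq_fderiv_comp_perm {f : (ι → ℝ) → F} {x : ι → ℝ} {σ : Equiv.Perm ι}
    (hf : DifferentiableAt ℝ f (x ∘ σ)) (hsym : ∀ᶠ y in 𝓝 x, f (y ∘ σ) = f y) (v : ι → ℝ) :
    fderiv ℝ f x v = fderiv ℝ f (x ∘ σ) (v ∘ σ) := by
  let P : (ι → ℝ) →L[ℝ] ι → ℝ := (LinearMap.funLeft ℝ ℝ σ).toContinuousLinearMap
  have hP : HasFDerivAt (fun y => f (y ∘ σ)) ((fderiv ℝ f (x ∘ σ)).comp P) x :=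
    hf.hasFDerivAt.comp x P.hasFDerivAt
  rw [(hP.congr_of_eventuallyEq (hsym.mono fun y hy => hy.symm)).fderiv]
  rfl

theorem abs_fderiv_single_sub_le [DecidableEq ι] {f : (ι → ℝ) → ℝ} {s : Set (ι → ℝ)} {L : ℝ≥0}
    {x : ι → ℝ} {i j : ι} (hL : LipschitzOnWith L (fderiv ℝ f) s) (hx : x ∈ s)
    (hxσ : x ∘ Equiv.swap i j ∈ s) (hf : DifferentiableAt ℝ f (x ∘ Equiv.swap i j))
    (hsym : ∀ᶠ y in 𝓝 x, f (y ∘ Equiv.swap i j) = f y) :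
    |fderiv ℝ f x (Pi.single j 1) - fderiv ℝ f x (Pi.single i 1)| ≤ L * |x i - x j| := by
  have hji : fderiv ℝ f x (Pi.single j 1) = fderiv ℝ f (x ∘ Equiv.swap i j) (Pi.single i 1) := by
    rw [fderiv_apply_eq_fderiv_comp_perm hf hsym, Pi.single_comp_equiv, Equiv.symm_swap,
      Equiv.swap_apply_right]
  calc |fderiv ℝ f x (Pi.single j 1) - fderiv ℝ f x (Pi.single i 1)|
      = ‖(fderiv ℝ f (x ∘ Equiv.swap i j) - fderiv ℝ f x) (Pi.single i 1)‖ := by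
        rw [hji, Real.norm_eq_abs]; rfl
    _ ≤ ‖fderiv ℝ f (x ∘ Equiv.swap i j) - fderiv ℝ f x‖ :=
        ContinuousLinearMap.norm_apply_single_le _ i
    _ ≤ L * ‖x ∘ Equiv.swap i j - x‖ := hL.norm_sub_le hxσ hx
    _ ≤ L * |x i - x j| := by gcongr; exact norm_comp_swap_sub_le x i j

end Coordinates

section PairForm

variable {ι : Type*} [Fintype ι] [LinearOrder ι]

noncomputable def pairForm (f : (ι → ℝ) → ℝ) (κ : ι → ℝ) : ℝ :=
  ∑ i, ∑ j ∈ univ.filter (fun j => i < j),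
    (κ i - κ j) * (fderiv ℝ f κ (Pi.single j 1) * κ i - fderiv ℝ f κ (Pi.single i 1) * κ j)

variable {f : (ι → ℝ) → ℝ}

theorem sum_fderiv_single_mul_sub_eq_pairForm {κ : ι → ℝ} (heuler : fderiv ℝ f κ κ = f κ) :
    (∑ i, fderiv ℝ f κ (Pi.single i 1)) * (∑ i, κ i ^ 2) - f κ * (∑ i, κ i) = pairForm f κ := by
  rw [← heuler, ContinuousLinearMap.apply_eq_sum_mul_apply_single,
    sum_mul_sum_sq_sub_sum_mul_mul_sum, pairForm]

theorem pairForm_const (f : (ι → ℝ) → ℝ) (t : ℝ) : pairForm f (fun _ => t) = 0 := by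
  simp [pairForm]

theorem hasFDerivAt_pairForm_const {t : ℝ} (hf : DifferentiableAt ℝ f (fun _ => t))
    (hf' : DifferentiableAt ℝ (fderiv ℝ f) (fun _ => t))
    (hsym : ∀ σ : Equiv.Perm ι, ∀ᶠ y in 𝓝 (fun _ => t), f (y ∘ σ) = f y) :
    HasFDerivAt (pairForm f) (0 : (ι → ℝ) →L[ℝ] ℝ) (fun _ => t) := by
  have hpartial : ∀ i j : ι, fderiv ℝ f (fun _ => t) (Pi.single j 1) =
      fderiv ℝ f (fun _ => t) (Pi.single i 1) := fun i j => by
    rw [fderiv_apply_eq_fderiv_comp_perm hf (hsym (Equiv.swap i j)), Pi.single_comp_equiv,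
      Equiv.symm_swap, Equiv.swap_apply_right]
    rfl
  have hdiff_partial : ∀ i : ι, DifferentiableAt ℝ (fun y => fderiv ℝ f y (Pi.single i 1))
      (fun _ => t) := fun i => hf'.clm_apply (differentiableAt_const _)
  unfold pairForm
  simpa only [sum_const_zero] using HasFDerivAt.fun_sum fun i _ => HasFDerivAt.fun_sum fun j _ =>
    hasFDerivAt_mul_zero_of_eq_zero (by fun_prop)
      (((hdiff_partial j).fun_mul (differentiableAt_apply i _)).fun_sub
        ((hdiff_partial i).fun_mul (differentiableAt_apply j _)))
      (sub_self t) (by simp [hpartial i j])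

theorem pairForm_le {κ : ι → ℝ} {A B L : ℝ} (hA : ∀ i, fderiv ℝ f κ (Pi.single i 1) ≤ A)
    (hB : ∀ i, |κ i| ≤ B)
    (hL : ∀ i j, |fderiv ℝ f κ (Pi.single j 1) - fderiv ℝ f κ (Pi.single i 1)| ≤ L * |κ i - κ j|) :
    pairForm f κ ≤ (A + B * L) * ∑ i, ∑ j ∈ univ.filter (fun j => i < j), (κ i - κ j) ^ 2 := by
  rw [pairForm, mul_sum]
  refine sum_le_sum fun i _ => ?_
  rw [mul_sum]
  exact sum_le_sum fun j _ => sub_mul_sub_le_of_abs_sub_le (hA i) (hB i) (hL i j)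

theorem exists_pairForm_le_of_isCompact {U K : Set (ι → ℝ)} (hU : IsOpen U)
    (hUperm : ∀ κ ∈ U, ∀ σ : Equiv.Perm ι, κ ∘ σ ∈ U) (hf : ContDiffOn ℝ 2 f U)
    (hsym : ∀ κ ∈ U, ∀ σ : Equiv.Perm ι, f (κ ∘ σ) = f κ) (hK : IsCompact K) (hKU : K ⊆ U) :
    ∃ C, 0 < C ∧ ∀ κ ∈ K,
      pairForm f κ ≤ C * ∑ i, ∑ j ∈ univ.filter (fun j => i < j), (κ i - κ j) ^ 2 := by
  set Kperm := ⋃ σ : Equiv.Perm ι, (fun κ => κ ∘ σ) '' K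
  have hmem : ∀ κ ∈ K, ∀ σ : Equiv.Perm ι, κ ∘ σ ∈ Kperm :=
    fun κ hκ σ => Set.mem_iUnion.2 ⟨σ, κ, hκ, rfl⟩
  have hKperm : IsCompact Kperm := isCompact_iUnion fun σ => hK.image (by fun_prop)
  have hKpermU : Kperm ⊆ U :=
    Set.iUnion_subset fun σ => Set.image_subset_iff.2 fun κ hκ => hUperm κ (hKU hκ) σ
  have hf' : ContDiffOn ℝ 1 (fderiv ℝ f) U := hf.fderiv_of_isOpen hU (by norm_num)
  obtain ⟨L, hL⟩ := hf'.exists_lipschitzOnWith_of_isCompact hU hKperm hKpermU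
  obtain ⟨A, hA⟩ := hK.exists_bound_of_continuousOn (hf'.continuousOn.mono hKU)
  obtain ⟨B, hB⟩ := hK.exists_bound_of_continuousOn continuousOn_id
  refine ⟨|A| + |B| * L + 1, by positivity, fun κ hκ => ?_⟩
  have hdiff : ∀ σ : Equiv.Perm ι, DifferentiableAt ℝ f (κ ∘ σ) := fun σ =>
    (hf.contDiffAt (hU.mem_nhds (hKpermU (hmem κ hκ σ)))).differentiableAt (by norm_num)
  have hsym_nhds : ∀ σ : Equiv.Perm ι, ∀ᶠ y in 𝓝 κ, f (y ∘ σ) = f y :=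
    fun σ => eventually_of_mem (hU.mem_nhds (hKU hκ)) fun y hy => hsym y hy σ
  calc pairForm f κ
      ≤ (|A| + |B| * L) * ∑ i, ∑ j ∈ univ.filter (fun j => i < j), (κ i - κ j) ^ 2 :=
        pairForm_le
          (fun i => (Real.le_norm_self _).trans <|
            ((fderiv ℝ f κ).norm_apply_single_le i).trans <| (hA κ hκ).trans (le_abs_self A))
          (fun i => (norm_le_pi_norm κ i).trans <| (hB κ hκ).trans (le_abs_self B))
          (fun i j => abs_fderiv_single_sub_le hL (hmem κ hκ 1) (hmem κ hκ _) (hdiff _)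
            (hsym_nhds _))
    _ ≤ (|A| + |B| * L + 1) * ∑ i, ∑ j ∈ univ.filter (fun j => i < j), (κ i - κ j) ^ 2 :=
        mul_le_mul_of_nonneg_right (by linarith) (by positivity)

end PairForm

theorem isOpen_setOf_forall_pos {ι : Type*} [Finite ι] : IsOpen {x : ι → ℝ | ∀ i, 0 < x i} := by
  rw [Set.ofPred_forall]
  exact isOpen_iInter_of_finite fun i => isOpen_lt continuous_const (continuous_apply i)

theorem diagonal_vanishing_quadratic_bound_general (n : ℕ)
    (Γ : Set (Fin n → ℝ)) (hΓ : Γ = {κ | ∀ i, 0 < κ i})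
    (F : (Fin n → ℝ) → ℝ)
    (hF2 : ContDiffOn ℝ 2 F Γ)
    (hsym : ∀ κ ∈ Γ, ∀ σ : Equiv.Perm (Fin n), F (κ ∘ σ) = F κ)
    (hhom : ∀ κ ∈ Γ, ∀ lam : ℝ, 0 < lam → F (lam • κ) = lam * F κ)
    (φ : (Fin n → ℝ) → ℝ)
    (hφ : ∀ κ, φ κ = (∑ i, fderiv ℝ F κ (Pi.single i 1)) * (∑ i, κ i ^ 2)
      - F κ * (∑ i, κ i)) :
    (∀ t : ℝ, 0 < t → φ (fun _ => t) = 0 ∧ fderiv ℝ φ (fun _ => t) = 0) ∧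
    (∀ K : Set (Fin n → ℝ), IsCompact K → K ⊆ Γ → ∃ C : ℝ, 0 < C ∧
      ∀ κ ∈ K, φ κ ≤ C * ∑ i, ∑ j ∈ Finset.univ.filter (fun j => i < j),
        (κ i - κ j) ^ 2) := by
  have hmemΓ : ∀ κ, κ ∈ Γ ↔ ∀ i, 0 < κ i := fun κ => by rw [hΓ, Set.mem_ofPred_eq]
  have hΓopen : IsOpen Γ := hΓ ▸ isOpen_setOf_forall_pos
  have hdiff : ∀ κ ∈ Γ, DifferentiableAt ℝ F κ := fun κ hκ =>
    (hF2.contDiffAt (hΓopen.mem_nhds hκ)).differentiableAt (by norm_num)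
  have hφ_eq : ∀ κ ∈ Γ, φ κ = pairForm F κ := fun κ hκ => by
    rw [hφ, sum_fderiv_single_mul_sub_eq_pairForm (fderiv_apply_self_of_homogeneous (hdiff κ hκ)
      (eventually_of_mem (lt_mem_nhds one_pos) fun l hl => hhom κ hκ l hl))]
  refine ⟨fun t ht => ?_, fun K hK hKΓ => ?_⟩
  · have hc : (fun _ => t) ∈ Γ := (hmemΓ _).2 fun _ => ht
    have hF' : DifferentiableAt ℝ (fderiv ℝ F) (fun _ => t) :=
      ((hF2.contDiffAt (hΓopen.mem_nhds hc)).fderiv_right (m := 1) (by norm_num)).differentiableAt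
        (by norm_num)
    have hsym_nhds : ∀ σ : Equiv.Perm (Fin n), ∀ᶠ y in 𝓝 (fun _ => t), F (y ∘ σ) = F y :=
      fun σ => eventually_of_mem (hΓopen.mem_nhds hc) fun y hy => hsym y hy σ
    refine ⟨(hφ_eq _ hc).trans (pairForm_const F t), ?_⟩
    exact ((hasFDerivAt_pairForm_const (hdiff _ hc) hF' hsym_nhds).congr_of_eventuallyEq
      (eventually_of_mem (hΓopen.mem_nhds hc) hφ_eq)).fderiv
  · have hΓperm : ∀ κ ∈ Γ, ∀ σ : Equiv.Perm (Fin n), κ ∘ σ ∈ Γ :=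
      fun κ hκ σ => (hmemΓ _).2 fun i => (hmemΓ κ).1 hκ (σ i)
    obtain ⟨C, hC, hbound⟩ := exists_pairForm_le_of_isCompact hΓopen hΓperm hF2 hsym hK hKΓ
    exact ⟨C, hC, fun κ hκ => (hφ_eq κ (hKΓ hκ)).trans_le (hbound κ hκ)⟩

/-- For a symmetric, 1-homogeneous, normalized curvature function `F` with
positive first derivatives, the quantity
`φ(κ) = (∑ᵢ Fᵢ)|κ|² - F·(∑ᵢ κᵢ)` vanishes to second order on the diagonal,
and on compact subsets of `Γ₊` it is controlled by
`C ∑_{i<j} (κᵢ - κⱼ)²`. -/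
theorem diagonal_vanishing_quadratic_bound (n : ℕ) (hn : 1 ≤ n)
    (Γ : Set (Fin n → ℝ)) (hΓ : Γ = {κ | ∀ i, 0 < κ i})
    (F : (Fin n → ℝ) → ℝ)
    (hF2 : ContDiffOn ℝ 2 F Γ)
    (hsym : ∀ κ ∈ Γ, ∀ σ : Equiv.Perm (Fin n), F (κ ∘ σ) = F κ)
    (hhom : ∀ κ ∈ Γ, ∀ lam : ℝ, 0 < lam → F (lam • κ) = lam * F κ)
    (hnorm : F (fun _ => 1) = 1)
    (hpos : ∀ κ ∈ Γ, ∀ i, 0 < fderiv ℝ F κ (Pi.single i 1))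
    (φ : (Fin n → ℝ) → ℝ)
    (hφ : ∀ κ, φ κ = (∑ i, fderiv ℝ F κ (Pi.single i 1)) * (∑ i, κ i ^ 2)
      - F κ * (∑ i, κ i)) :
    (∀ t : ℝ, 0 < t → φ (fun _ => t) = 0 ∧ fderiv ℝ φ (fun _ => t) = 0) ∧
    (∀ K : Set (Fin n → ℝ), IsCompact K → K ⊆ Γ → ∃ C : ℝ, 0 < C ∧
      ∀ κ ∈ K, φ κ ≤ C * ∑ i, ∑ j ∈ Finset.univ.filter (fun j => i < j),
        (κ i - κ j) ^ 2) :=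
  diagonal_vanishing_quadratic_bound_general n Γ hΓ F hF2 hsym hhom φ hφ
end

section
/- Let u : [τ₀, ∞) → ℝ be a locally Lipschitz function satisfying u'(τ) ≥ a u(τ) − c e^{−δτ} for almost every τ ≥ τ₀, where a, c, δ > 0 and u ≥ 0. If u is bounded, then there exists a constant c' such that u(τ) ≤ c' e^{−δτ} for all τ ≥ τ₀. -/
open Real MeasureTheory Set Filter

/-- Gluing two Lipschitz estimates on adjacent closed intervals. -/
lemma lipschitzOnWith_Icc_glue {f : ℝ → ℝ} {K₁ K₂ : NNReal} {p x r : ℝ}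
    (h₁ : LipschitzOnWith K₁ f (Icc p x)) (h₂ : LipschitzOnWith K₂ f (Icc x r)) :
    LipschitzOnWith (max K₁ K₂) f (Icc p r) := by
  rw [lipschitzOnWith_iff_dist_le_mul] at h₁ h₂ ⊢
  have hK₁ : (K₁ : ℝ) ≤ ((max K₁ K₂ : NNReal) : ℝ) := by exact_mod_cast le_max_left K₁ K₂
  have hK₂ : (K₂ : ℝ) ≤ ((max K₁ K₂ : NNReal) : ℝ) := by exact_mod_cast le_max_right K₁ K₂
  intro y hy z hz
  wlog hyz : y ≤ z generalizing y z
  · rw [dist_comm, dist_comm y z]; exact this z hz y hy (le_of_not_ge hyz)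
  rcases le_total z x with h | h
  · calc dist (f y) (f z) ≤ K₁ * dist y z := h₁ y ⟨hy.1, hyz.trans h⟩ z ⟨hz.1, h⟩
      _ ≤ _ := by gcongr
  rcases le_total x y with h' | h'
  · calc dist (f y) (f z) ≤ K₂ * dist y z := h₂ y ⟨h', hy.2⟩ z ⟨h'.trans hyz, hz.2⟩
      _ ≤ _ := by gcongr
  · have e1 : dist y x = x - y := by rw [Real.dist_eq, abs_of_nonpos (by linarith)]; ring
    have e2 : dist x z = z - x := by rw [Real.dist_eq, abs_of_nonpos (by linarith)]; ring
    have e3 : dist y z = z - y := by rw [Real.dist_eq, abs_of_nonpos (by linarith)]; ring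
    calc dist (f y) (f z) ≤ dist (f y) (f x) + dist (f x) (f z) := dist_triangle _ _ _
      _ ≤ K₁ * dist y x + K₂ * dist x z :=
        add_le_add (h₁ y ⟨hy.1, h'⟩ x ⟨hy.1.trans h', le_rfl⟩)
          (h₂ x ⟨le_rfl, h.trans hz.2⟩ z ⟨h, hz.2⟩)
      _ ≤ ((max K₁ K₂ : NNReal) : ℝ) * dist y x + ((max K₁ K₂ : NNReal) : ℝ) * dist x z := by
        gcongr
      _ = ((max K₁ K₂ : NNReal) : ℝ) * dist y z := by rw [e1, e2, e3]; ring

/-- A locally Lipschitz function on `ℝ` is Lipschitz on every compact interval. -/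
lemma LocallyLipschitz.exists_lipschitzOnWith_Icc {f : ℝ → ℝ} (hf : LocallyLipschitz f)
    (p q : ℝ) : ∃ K : NNReal, LipschitzOnWith K f (Icc p q) := by
  have hsing : ∀ r : ℝ, LipschitzOnWith 1 f (Icc r r) := by
    intro r y hy z hz
    have : y = z := le_antisymm (hy.2.trans hz.1) (hz.2.trans hy.1)
    simp [this]
  rcases le_or_gt q p with h | hpq
  · rcases lt_or_eq_of_le h with h | h
    · exact ⟨1, by rw [Icc_eq_empty (not_le.2 h)]; exact lipschitzOnWith_empty 1 f⟩
    · exact ⟨1, h ▸ hsing q⟩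
  set A := {x ∈ Icc p q | ∃ K : NNReal, LipschitzOnWith K f (Icc p x)} with hA
  have hpA : p ∈ A := ⟨⟨le_rfl, hpq.le⟩, 1, hsing p⟩
  have hAne : A.Nonempty := ⟨p, hpA⟩
  have hbdd : BddAbove A := ⟨q, fun x hx => hx.1.2⟩
  set m := sSup A with hm
  have hmp : p ≤ m := le_csSup hbdd hpA
  have hmq : m ≤ q := csSup_le hAne fun x hx => hx.1.2
  obtain ⟨K₀, t, ht, hK₀⟩ := hf m
  obtain ⟨ε, hε, hball⟩ := Metric.mem_nhds_iff.1 ht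
  obtain ⟨x, hxA, hx⟩ : ∃ x ∈ A, m - ε / 2 < x :=
    exists_lt_of_lt_csSup hAne (by linarith)
  have hxm : x ≤ m := le_csSup hbdd hxA
  obtain ⟨K₁, hK₁⟩ := hxA.2
  set r := min (m + ε / 2) q with hr
  have hxr : x ≤ r := le_min (by linarith) (hxm.trans hmq)
  have hsub : Icc x r ⊆ Metric.ball m ε := by
    intro y hy
    have h1 : m - ε / 2 < y := lt_of_lt_of_le hx hy.1
    have h2 : y ≤ m + ε / 2 := hy.2.trans (min_le_left _ _)
    rw [Metric.mem_ball, Real.dist_eq, abs_lt]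
    constructor <;> linarith
  have hK₂ : LipschitzOnWith K₀ f (Icc x r) := (hK₀.mono (hsub.trans hball))
  have hglue : LipschitzOnWith (max K₁ K₀) f (Icc p r) := lipschitzOnWith_Icc_glue hK₁ hK₂
  have hrA : r ∈ A := ⟨⟨hxA.1.1.trans hxr, min_le_right _ _⟩, _, hglue⟩
  have hrm : r ≤ m := le_csSup hbdd hrA
  have hrq : r = q := by
    rcases le_total (m + ε / 2) q with hh | hh
    · exfalso
      have : r = m + ε / 2 := min_eq_left hh
      rw [this] at hrm; linarith
    · exact min_eq_right hh
  exact ⟨_, hrq ▸ hglue⟩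

/-- FTC inequality for monotone continuous functions: the integral of the derivative
is at most the total increment; moreover the derivative is integrable. -/
lemma monotone_ftc {f : ℝ → ℝ} (hm : Monotone f) (hcont : Continuous f) {p q : ℝ}
    (hpq : p ≤ q) :
    IntegrableOn (deriv f) (Ioc p q) volume ∧
      ∫ x in Ioc p q, deriv f x ≤ f q - f p := by
  set F : StieltjesFunction ℝ := ⟨f, hm, fun x => hcont.continuousAt.continuousWithinAt⟩ with hF
  have hFf : (F : ℝ → ℝ) = f := rfl
  have hae : ∀ᵐ x, deriv f x = (F.measure.rnDeriv volume x).toReal := by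
    filter_upwards [F.ae_hasDerivAt] with x hx
    rw [← hFf]
    exact hx.deriv
  have hfin : F.measure (Ioc p q) ≠ ⊤ := by
    rw [F.measure_Ioc]; exact ENNReal.ofReal_ne_top
  have hint : IntegrableOn (fun x => (F.measure.rnDeriv volume x).toReal) (Ioc p q) volume :=
    Measure.integrableOn_toReal_rnDeriv hfin
  refine ⟨hint.congr (ae_restrict_of_ae (hae.mono fun x h => h.symm)), ?_⟩
  · calc ∫ x in Ioc p q, deriv f x
        = ∫ x in Ioc p q, (F.measure.rnDeriv volume x).toReal :=
          integral_congr_ae (ae_restrict_of_ae hae)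
      _ ≤ (F.measure (Ioc p q)).toReal := Measure.setIntegral_toReal_rnDeriv_le hfin
      _ = f q - f p := by
          rw [F.measure_Ioc, ENNReal.toReal_ofReal (sub_nonneg.2 (hm hpq))]

/-- One-sided FTC lower bound for globally Lipschitz functions with an a.e. lower bound
on the derivative. -/
lemma lipschitz_ftc_lower {f φ : ℝ → ℝ} {K : NNReal} (hf : LipschitzWith K f)
    (hφ : Continuous φ) {p q : ℝ} (hpq : p ≤ q)
    (hle : ∀ᵐ x, x ∈ Ioc p q → φ x ≤ deriv f x) :
    ∫ x in Ioc p q, φ x ≤ f q - f p := by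
  set g : ℝ → ℝ := fun x => f x + K * x with hg
  have hgm : Monotone g := by
    intro x y hxy
    have h1 := hf.dist_le_mul x y
    rw [Real.dist_eq, Real.dist_eq] at h1
    have e : |x - y| = y - x := by rw [abs_of_nonpos (by linarith)]; ring
    rw [e] at h1
    have h2 : f x - f y ≤ |f x - f y| := le_abs_self _
    simp only [hg]
    linarith
  have hgc : Continuous g := hf.continuous.add (continuous_const.mul continuous_id)
  obtain ⟨hint, hle'⟩ := monotone_ftc hgm hgc hpq
  have hder : ∀ᵐ x : ℝ, deriv f x = deriv g x - K := by
    filter_upwards [hgm.ae_differentiableAt] with x hx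
    have h2 : HasDerivAt (fun y : ℝ => (K : ℝ) * y) K x := by
      simpa using (hasDerivAt_id x).const_mul (K : ℝ)
    have h3 : HasDerivAt (fun y => g y - (K : ℝ) * y) (deriv g x - K) x := hx.hasDerivAt.sub h2
    have h4 : (fun y => g y - (K : ℝ) * y) = f := by funext y; simp only [hg]; ring
    rw [h4] at h3
    exact h3.deriv
  have hconst : IntegrableOn (fun _ : ℝ => (K : ℝ)) (Ioc p q) volume :=
    integrableOn_const measure_Ioc_lt_top.ne
  have hintf : IntegrableOn (deriv f) (Ioc p q) volume :=
    (hint.sub hconst).congr (ae_restrict_of_ae (hder.mono fun x h => h.symm))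
  have h1 : ∫ x in Ioc p q, φ x ≤ ∫ x in Ioc p q, deriv f x := by
    refine setIntegral_mono_ae_restrict (hφ.integrableOn_Ioc) hintf ?_
    filter_upwards [ae_restrict_mem measurableSet_Ioc, ae_restrict_of_ae hle] with x ha hb
    exact hb ha
  have hvol : (volume (Ioc p q)).toReal = q - p := by
    rw [Real.volume_Ioc, ENNReal.toReal_ofReal (sub_nonneg.2 hpq)]
  have h2 : ∫ x in Ioc p q, deriv f x = (∫ x in Ioc p q, deriv g x) - K * (q - p) := by
    rw [integral_congr_ae (ae_restrict_of_ae hder), integral_sub hint hconst]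
    rw [setIntegral_const, measureReal_def, hvol, smul_eq_mul]
    ring
  have h3 : g q - g p = f q - f p + K * (q - p) := by simp only [hg]; ring
  linarith

set_option maxHeartbeats 1000000 in
/-- A bounded, nonnegative, locally Lipschitz function satisfying a.e. the
differential inequality `u' ≥ a·u - c·e^{-δτ}` with `a, c, δ > 0` must decay
exponentially: `u(τ) ≤ c'·e^{-δτ}`. -/
theorem gronwall_exponential_decay (τ₀ a c δ : ℝ)
    (ha : 0 < a) (hc : 0 < c) (hδ : 0 < δ)
    (u : ℝ → ℝ) (hLip : LocallyLipschitz u)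
    (hnonneg : ∀ τ, τ₀ ≤ τ → 0 ≤ u τ)
    (hbdd : ∃ M : ℝ, ∀ τ, τ₀ ≤ τ → u τ ≤ M)
    (hineq : ∀ᵐ τ ∂(volume : Measure ℝ), τ₀ ≤ τ →
      a * u τ - c * Real.exp (-δ * τ) ≤ deriv u τ) :
    ∃ c' : ℝ, ∀ τ, τ₀ ≤ τ → u τ ≤ c' * Real.exp (-δ * τ) := by
  obtain ⟨M, hM⟩ := hbdd
  set k : ℝ := c / (a + δ) with hk
  have hkpos : 0 < k := div_pos hc (by linarith)
  have hkc : k * (a + δ) = c := div_mul_cancel₀ c (by positivity)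
  set v : ℝ → ℝ := fun τ => u τ - k * Real.exp (-δ * τ) with hv
  have hexpC : ContDiff ℝ 1 fun x : ℝ => k * Real.exp (-δ * x) :=
    contDiff_const.mul (Real.contDiff_exp.comp (contDiff_const.mul contDiff_id))
  have hvLip : LocallyLipschitz v := hLip.sub hexpC.locallyLipschitz
  have hvcont : Continuous v := hvLip.continuous
  -- almost everywhere differentiability of u
  have hudiff : ∀ᵐ x : ℝ, DifferentiableAt ℝ u x := by
    have H : ∀ n : ℤ, ∀ᵐ x : ℝ, x ∈ Ioo (n : ℝ) (n + 1) → DifferentiableAt ℝ u x := by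
      intro n
      obtain ⟨K, hK⟩ := hLip.exists_lipschitzOnWith_Icc (n : ℝ) ((n : ℝ) + 1)
      set pr : ℝ → ℝ := fun x => max (n : ℝ) (min ((n : ℝ) + 1) x) with hpr
      have hprL : LipschitzWith 1 pr :=
        LipschitzWith.const_max (LipschitzWith.const_min LipschitzWith.id ((n : ℝ) + 1)) (n : ℝ)
      have hmaps : MapsTo pr univ (Icc (n : ℝ) ((n : ℝ) + 1)) := fun x _ =>
        ⟨le_max_left _ _, max_le (by linarith) (min_le_left _ _)⟩
      have hw : LipschitzWith (K * 1) (u ∘ pr) := by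
        rw [← lipschitzOnWith_univ]
        exact hK.comp hprL.lipschitzOnWith hmaps
      filter_upwards [hw.ae_differentiableAt (μ := volume)] with x hx hxmem
      have heq : u ∘ pr =ᶠ[nhds x] u := by
        filter_upwards [isOpen_Ioo.mem_nhds hxmem] with y hy
        simp only [Function.comp_apply, hpr]
        rw [min_eq_right hy.2.le, max_eq_right hy.1.le]
      exact hx.congr_of_eventuallyEq heq.symm
    have H2 : ∀ᵐ x : ℝ, ∀ n : ℤ, x ∈ Ioo (n : ℝ) (n + 1) → DifferentiableAt ℝ u x :=
      ae_all_iff.2 H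
    have hnull : volume (Set.range ((↑) : ℤ → ℝ)) = 0 :=
      (Set.countable_range _).measure_zero _
    filter_upwards [H2, measure_eq_zero_iff_ae_notMem.mp hnull] with x h2 h3
    refine h2 ⌊x⌋ ⟨?_, by exact_mod_cast Int.lt_floor_add_one x⟩
    rcases (Int.floor_le x).lt_or_eq with h | h
    · exact h
    · exact absurd ⟨⌊x⌋, h⟩ h3
  -- the differential inequality for v
  have hvder : ∀ᵐ x : ℝ, τ₀ ≤ x → a * v x ≤ deriv v x := by
    filter_upwards [hineq, hudiff] with x hx hdx hτx
    have hE : HasDerivAt (fun t : ℝ => k * Real.exp (-δ * t))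
        (k * (Real.exp (-δ * x) * (-δ))) x := by
      have h1 : HasDerivAt (fun t : ℝ => -δ * t) (-δ) x := by
        simpa using (hasDerivAt_id x).const_mul (-δ)
      exact (h1.exp).const_mul k
    have hvd : HasDerivAt v (deriv u x - k * (Real.exp (-δ * x) * (-δ))) x :=
      hdx.hasDerivAt.sub hE
    rw [hvd.deriv]
    have h1 := hx hτx
    have h2 : c * Real.exp (-δ * x) = k * a * Real.exp (-δ * x)
        + k * δ * Real.exp (-δ * x) := by rw [← hkc]; ring
    simp only [hv]
    nlinarith [Real.exp_pos (-δ * x)]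
  refine ⟨k, fun τ₁ hτ₁ => ?_⟩
  by_contra hlt
  push_neg at hlt
  set ε : ℝ := v τ₁ with hε
  have hεpos : 0 < ε := by simp only [hε, hv]; linarith
  clear_value ε
  -- key integral inequality
  have key : ∀ T, τ₁ ≤ T → a * ∫ x in Ioc τ₁ T, v x ≤ v T - v τ₁ := by
    intro T hT
    obtain ⟨K, hK⟩ := hvLip.exists_lipschitzOnWith_Icc τ₁ T
    set pr : ℝ → ℝ := fun x => max τ₁ (min T x) with hpr
    have hprL : LipschitzWith 1 pr :=
      LipschitzWith.const_max (LipschitzWith.const_min LipschitzWith.id T) τ₁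
    have hmaps : MapsTo pr univ (Icc τ₁ T) := fun x _ =>
      ⟨le_max_left _ _, max_le hT (min_le_left _ _)⟩
    have hfLip : LipschitzWith (K * 1) (v ∘ pr) := by
      rw [← lipschitzOnWith_univ]
      exact hK.comp hprL.lipschitzOnWith hmaps
    have hfeq : ∀ x ∈ Icc τ₁ T, (v ∘ pr) x = v x := by
      intro x hx
      simp only [Function.comp_apply, hpr]
      rw [min_eq_right hx.2, max_eq_right hx.1]
    have hTne : ∀ᵐ x : ℝ, x ≠ T :=
      measure_eq_zero_iff_ae_notMem.mp (measure_singleton T) |>.mono fun x hx => hx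
    have hderle : ∀ᵐ x : ℝ, x ∈ Ioc τ₁ T → a * v x ≤ deriv (v ∘ pr) x := by
      filter_upwards [hvder, hTne] with x hx hxT hmem
      have hxo : x ∈ Ioo τ₁ T := ⟨hmem.1, lt_of_le_of_ne hmem.2 hxT⟩
      have heq : v ∘ pr =ᶠ[nhds x] v := by
        filter_upwards [isOpen_Ioo.mem_nhds hxo] with y hy
        exact hfeq y ⟨hy.1.le, hy.2.le⟩
      rw [heq.deriv_eq]
      exact hx (hτ₁.trans hxo.1.le)
    have hφ : Continuous fun x => a * v x := continuous_const.mul hvcont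
    have := lipschitz_ftc_lower hfLip hφ hT hderle
    rw [hfeq T ⟨hT, le_rfl⟩, hfeq τ₁ ⟨le_rfl, hT⟩] at this
    calc a * ∫ x in Ioc τ₁ T, v x = ∫ x in Ioc τ₁ T, a * v x := by
          rw [integral_const_mul]
      _ ≤ v T - v τ₁ := this
  -- interval integral version
  set w : ℝ → ℝ := fun T => ∫ x in τ₁..T, v x with hw
  have key' : ∀ T, τ₁ ≤ T → a * w T ≤ v T - ε := by
    intro T hT
    have h := key T hT
    rw [← intervalIntegral.integral_of_le hT] at h
    simp only [hw, hε]
    exact h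
  have hw' : ∀ T, HasDerivAt w (v T) T := fun T =>
    (hvcont.integral_hasStrictDerivAt τ₁ T).hasDerivAt
  set z : ℝ → ℝ := fun T => Real.exp (-(a * T)) * (w T + ε / a) with hz
  have hz' : ∀ T, HasDerivAt z
      (Real.exp (-(a * T)) * (-a) * (w T + ε / a) + Real.exp (-(a * T)) * v T) T := by
    intro T
    have hE : HasDerivAt (fun T : ℝ => Real.exp (-(a * T))) (Real.exp (-(a * T)) * (-a)) T := by
      have h1 : HasDerivAt (fun T : ℝ => -(a * T)) (-a) T := by
        have := ((hasDerivAt_id T).const_mul a).neg; simp only [mul_one] at this; exact this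
      exact h1.exp
    exact hE.mul ((hw' T).add_const _)
  have hmono : MonotoneOn z (Ici τ₁) := by
    apply monotoneOn_of_deriv_nonneg (convex_Ici τ₁)
    · exact fun x _ => ((hz' x).differentiableAt.continuousAt).continuousWithinAt
    · exact fun x _ => ((hz' x).differentiableAt).differentiableWithinAt
    · intro x hx
      rw [interior_Ici] at hx
      rw [(hz' x).deriv]
      have h1 : a * w x ≤ v x - ε := key' x hx.le
      have h2 : Real.exp (-(a * x)) * (-a) * (w x + ε / a) + Real.exp (-(a * x)) * v x
          = Real.exp (-(a * x)) * (v x - a * w x - ε) := by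
        field_simp
        ring
      rw [h2]
      have : 0 ≤ v x - a * w x - ε := by linarith
      positivity
  -- choose a large time
  set S : ℝ := max (4 * M / (ε * a)) 0 + 1 with hS
  have hS0 : 0 < S := by
    have h := le_max_right (4 * M / (ε * a)) 0
    rw [hS]
    linarith
  set T : ℝ := τ₁ + S with hT
  have hτT : τ₁ ≤ T := by simp only [hT]; linarith
  clear_value S T
  have hzz := hmono (self_mem_Ici) (mem_Ici.2 hτT) hτT
  have hwτ₁ : w τ₁ = 0 := intervalIntegral.integral_same
  -- bound w T
  have hwb : w T ≤ M * S := by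
    have hvle : ∀ x ∈ Icc τ₁ T, v x ≤ M := by
      intro x hx
      have hx0 : τ₀ ≤ x := hτ₁.trans hx.1
      have := hM x hx0
      have hE : 0 < k * Real.exp (-δ * x) := by positivity
      simp only [hv]; linarith
    have h1 : w T ≤ ∫ _ in τ₁..T, M :=
      intervalIntegral.integral_mono_on hτT (hvcont.intervalIntegrable _ _)
        intervalIntegrable_const hvle
    have h2 : ∫ _ in τ₁..T, M = (T - τ₁) * M := by
      rw [intervalIntegral.integral_const, smul_eq_mul]
    rw [h2] at h1
    have : T - τ₁ = S := by simp only [hT]; ring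
    rw [this] at h1
    linarith [h1]
  -- derive the contradiction
  have hzineq : Real.exp (-(a * τ₁)) * (ε / a) ≤ Real.exp (-(a * T)) * (M * S + ε / a) := by
    have h1 : z τ₁ = Real.exp (-(a * τ₁)) * (ε / a) := by
      simp only [hz, hwτ₁]; ring_nf
    have h2 : z T ≤ Real.exp (-(a * T)) * (M * S + ε / a) := by
      simp only [hz]
      exact mul_le_mul_of_nonneg_left (by linarith [hwb]) (Real.exp_pos _).le
    calc Real.exp (-(a * τ₁)) * (ε / a) = z τ₁ := h1.symm
      _ ≤ z T := hzz
      _ ≤ _ := h2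
  have hmul : (ε / a) * Real.exp (a * S) ≤ M * S + ε / a := by
    have hpos : 0 < Real.exp (a * T) := Real.exp_pos _
    have h1 := mul_le_mul_of_nonneg_left hzineq hpos.le
    have e1 : Real.exp (a * T) * Real.exp (-(a * T)) = 1 := by
      rw [← Real.exp_add]; ring_nf; exact Real.exp_zero
    have e2 : Real.exp (a * T) * Real.exp (-(a * τ₁)) = Real.exp (a * S) := by
      rw [← Real.exp_add]; congr 1; simp only [hT]; ring
    calc (ε / a) * Real.exp (a * S) = Real.exp (a * T) * (Real.exp (-(a * τ₁)) * (ε / a)) := by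
          rw [show Real.exp (a * T) * (Real.exp (-(a * τ₁)) * (ε / a))
              = (Real.exp (a * T) * Real.exp (-(a * τ₁))) * (ε / a) by ring, e2]; ring
      _ ≤ Real.exp (a * T) * (Real.exp (-(a * T)) * (M * S + ε / a)) := h1
      _ = M * S + ε / a := by
          rw [show Real.exp (a * T) * (Real.exp (-(a * T)) * (M * S + ε / a))
              = (Real.exp (a * T) * Real.exp (-(a * T))) * (M * S + ε / a) by ring, e1]; ring
  have hexp2 : (1 + a * S / 2) * (1 + a * S / 2) ≤ Real.exp (a * S) := by
    have h1 : 1 + a * S / 2 ≤ Real.exp (a * S / 2) := by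
      have := Real.add_one_le_exp (a * S / 2)
      linarith
    have h2 : Real.exp (a * S / 2) * Real.exp (a * S / 2) = Real.exp (a * S) := by
      rw [← Real.exp_add]; congr 1; ring
    have h3 : 0 ≤ 1 + a * S / 2 := by positivity
    nlinarith [Real.exp_pos (a * S / 2)]
  -- now: (ε/a) * (1 + aS + a²S²/4) ≤ M S + ε/a
  have hfin : ε * S + ε * a * S ^ 2 / 4 ≤ M * S := by
    have h1 : (ε / a) * ((1 + a * S / 2) * (1 + a * S / 2)) ≤ (ε / a) * Real.exp (a * S) := by
      apply mul_le_mul_of_nonneg_left hexp2 (by positivity)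
    have h2 : (ε / a) * ((1 + a * S / 2) * (1 + a * S / 2))
        = ε / a + ε * S + ε * a * S ^ 2 / 4 := by
      field_simp
      ring
    nlinarith [hmul]
  have hMS : M < ε * a * S / 4 := by
    have h1 : 4 * M / (ε * a) < S := by
      have := le_max_left (4 * M / (ε * a)) 0
      simp only [hS]; linarith
    have h2 : 0 < ε * a := by positivity
    rw [div_lt_iff₀ h2] at h1
    nlinarith [h1]
  nlinarith [hfin, mul_lt_mul_of_pos_right hMS hS0, mul_pos hεpos hS0, sq_nonneg S]
end
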